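/- arXiv:2510.25940 — 4 statements merged into one kernel-verified Lean document; each statement's English description precedes it below -/
import Mathlib

section
/- Let H(q,t) = \sum_{d\geq 0} q^{-(m-1)d(d-1)/2} t^d / \prod_{k=1}^d(1-q^k). Then the quotient F(t) = H(q,t)/H(q,qt) satisfies F(t) = 1 + t \cdot \prod_{k=1}^m F(q^{1-k}t). -/
open PowerSeries

/-- The series `H(q,t) = ∑_{d≥0} q^{-(m-1)d(d-1)/2} t^d / ∏_{k=1}^d(1-q^k)`. -/
noncomputable def Hser (m : ℕ) : PowerSeries (RatFunc ℚ) :=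
  PowerSeries.mk fun d =>
    (RatFunc.X : RatFunc ℚ) ^ (-(((m : ℤ) - 1) * d * ((d : ℤ) - 1) / 2)) /
      ∏ k ∈ Finset.Icc 1 d, (1 - (RatFunc.X : RatFunc ℚ) ^ k)

/- The recurrence `a_{d+1} (1 - q^{d+1}) = q^{(1-m)d} a_d` for the coefficients of `H` says
`H(t) = H(qt) + t H(q^{1-m}t)`. Put `B_j(t) = H(q^{1-j}t)`; then `F(q^{-k}t) = B_{k+1}/B_k`, so the
product `∏_{k<m} F(q^{-k}t)` telescopes to `B_m/B_0`, and dividing the identity `H = B_0 + t B_m`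
by `B_0 = H(qt)` gives the functional equation. -/

namespace PowerSeries

variable {k : Type*} [Field k]

theorem constantCoeff_rescale (c : k) (f : k⟦X⟧) :
    constantCoeff (rescale c f) = constantCoeff f := by
  rw [← coeff_zero_eq_constantCoeff_apply, coeff_rescale, pow_zero, one_mul,
    coeff_zero_eq_constantCoeff_apply]

theorem rescale_inv (c : k) (f : k⟦X⟧) : rescale c f⁻¹ = (rescale c f)⁻¹ := by
  by_cases hf : constantCoeff f = 0
  · rw [inv_eq_zero.mpr hf, map_zero, eq_comm, inv_eq_zero, constantCoeff_rescale, hf]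
  · rw [eq_inv_iff_mul_eq_one (by rwa [constantCoeff_rescale]), ← map_mul,
      PowerSeries.inv_mul_cancel f hf, map_one]

theorem prod_range_mul_inv_telescope (B : ℕ → k⟦X⟧) (hB : ∀ j, constantCoeff (B j) ≠ 0)
    (n : ℕ) : ∏ j ∈ Finset.range n, B (j + 1) * (B j)⁻¹ = B n * (B 0)⁻¹ := by
  induction n with
  | zero => simp [PowerSeries.mul_inv_cancel _ (hB 0)]
  | succ n ih =>
    rw [Finset.prod_range_succ, ih]
    calc B n * (B 0)⁻¹ * (B (n + 1) * (B n)⁻¹)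
        = B (n + 1) * ((B n)⁻¹ * B n) * (B 0)⁻¹ := by ring
      _ = B (n + 1) * (B 0)⁻¹ := by rw [PowerSeries.inv_mul_cancel _ (hB n), mul_one]

end PowerSeries

theorem RatFunc.one_sub_X_pow_ne_zero {K : Type*} [Field K] {n : ℕ} (hn : n ≠ 0) :
    1 - (RatFunc.X : RatFunc K) ^ n ≠ 0 := by
  have hpoly : (Polynomial.X : Polynomial K) ^ n - Polynomial.C 1 ≠ 0 :=
    Polynomial.X_pow_sub_C_ne_zero (Nat.pos_of_ne_zero hn) 1
  rw [← neg_sub, neg_ne_zero, ← RatFunc.algebraMap_X, ← map_pow,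
    ← map_one (algebraMap (Polynomial K) (RatFunc K)), ← map_sub, ← Polynomial.C_1]
  exact (map_ne_zero_iff _ (RatFunc.algebraMap_injective K)).mpr hpoly

theorem Int.mul_add_one_mul_ediv_two (a d : ℤ) :
    a * (d + 1) * (d + 1 - 1) / 2 = a * d * (d - 1) / 2 + a * d := by
  rw [show a * (d + 1) * (d + 1 - 1) = a * d * (d - 1) + a * d * 2 by ring,
    Int.add_mul_ediv_right _ _ two_ne_zero]

theorem constantCoeff_Hser (m : ℕ) : constantCoeff (Hser m) = 1 := by
  simp [Hser, ← coeff_zero_eq_constantCoeff_apply, coeff_mk]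

theorem coeff_Hser_succ (m d : ℕ) :
    coeff (d + 1) (Hser m) * (1 - (RatFunc.X : RatFunc ℚ) ^ (d + 1)) =
      (RatFunc.X : RatFunc ℚ) ^ ((1 - (m : ℤ)) * d) * coeff d (Hser m) := by
  have hX : (RatFunc.X : RatFunc ℚ) ≠ 0 := RatFunc.X_ne_zero
  simp only [Hser, coeff_mk, Finset.prod_Icc_succ_top (Nat.le_add_left 1 d)]
  push_cast
  rw [Int.mul_add_one_mul_ediv_two, neg_add, zpow_add₀ hX,
    show -((m - 1 : ℤ) * d) = (1 - m) * d by ring]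
  field_simp [RatFunc.one_sub_X_pow_ne_zero (Nat.succ_ne_zero d),
    Finset.prod_ne_zero_iff.mpr fun j hj => RatFunc.one_sub_X_pow_ne_zero (K := ℚ)
      (Nat.one_le_iff_ne_zero.mp (Finset.mem_Icc.mp hj).1)]

theorem Hser_eq_rescale_add_X_mul_rescale (m : ℕ) :
    Hser m = rescale (RatFunc.X : RatFunc ℚ) (Hser m)
      + X * rescale ((RatFunc.X : RatFunc ℚ) ^ (1 - (m : ℤ))) (Hser m) := by
  ext (_ | d)
  · simp [constantCoeff_rescale]
  · rw [map_add, coeff_succ_X_mul, coeff_rescale, coeff_rescale, ← zpow_natCast (_ ^ _) d,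
      ← zpow_mul, ← sub_eq_iff_eq_add', ← one_sub_mul, mul_comm (1 - _), coeff_Hser_succ]

theorem Hser_quotient_functional_equation_general (m : ℕ) :
    Hser m * (rescale (RatFunc.X : RatFunc ℚ) (Hser m))⁻¹ =
      1 + X * ∏ k ∈ Finset.range m,
        rescale ((RatFunc.X : RatFunc ℚ) ^ (-(k : ℤ)))
          (Hser m * (rescale (RatFunc.X : RatFunc ℚ) (Hser m))⁻¹) := by
  set q : RatFunc ℚ := RatFunc.X
  set H := Hser m
  set B : ℕ → PowerSeries (RatFunc ℚ) := fun j => rescale (q ^ (1 - (j : ℤ))) H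
  have hB_coeff : ∀ j, constantCoeff (B j) ≠ 0 := fun j => by
    simp [B, H, constantCoeff_rescale, constantCoeff_Hser]
  have hB_zero : B 0 = rescale q H := by simp [B]
  have hrescale_quotient (k : ℕ) : rescale (q ^ (-(k : ℤ))) (H * (rescale q H)⁻¹) =
      B (k + 1) * (B k)⁻¹ := by
    rw [map_mul, rescale_inv, rescale_rescale, ← zpow_one_add₀ RatFunc.X_ne_zero]
    simp only [B]
    congr 4
    push_cast
    ring
  rw [Finset.prod_congr rfl fun k _ => hrescale_quotient k,
    prod_range_mul_inv_telescope B hB_coeff, ← hB_zero]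
  calc H * (B 0)⁻¹ = (B 0 + X * B m) * (B 0)⁻¹ := by
        rw [hB_zero]; exact congrArg (· * _) (Hser_eq_rescale_add_X_mul_rescale m)
    _ = 1 + X * (B m * (B 0)⁻¹) := by
        rw [add_mul, PowerSeries.mul_inv_cancel _ (hB_coeff 0), mul_assoc]

/-- The quotient `F(t) = H(q,t)/H(q,qt)` satisfies `F(t) = 1 + t·∏_{k=1}^m F(q^{1-k}t)`. -/
theorem Hser_quotient_functional_equation (m : ℕ) (hm : 1 ≤ m) :
    Hser m * (rescale (RatFunc.X : RatFunc ℚ) (Hser m))⁻¹ =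
      1 + X * ∏ k ∈ Finset.range m,
        rescale ((RatFunc.X : RatFunc ℚ) ^ (-(k : ℤ)))
          (Hser m * (rescale (RatFunc.X : RatFunc ℚ) (Hser m))⁻¹) :=
  Hser_quotient_functional_equation_general m
end

section
/- For a finite tree T \subset \Omega written as the grafting T = \{\emptyset\} \cup \bigcup_k k T_k, the statistic |D(T)| satisfies the recursion |D(T)| = \sum_{k=1}^m |D(T_k)| + \sum_{1 \le k' < k \le m} |T_{k'}| \cdot ((m-1)|T_k| + 1). -/
open scoped Classical

/-- A (finite) tree: a finite set of words over `{1,…,m}` closed under prefixes. -/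
def IsTree (m : ℕ) (T : Finset (List (Fin m))) : Prop :=
  ∀ ω ∈ T, ∀ ω' : List (Fin m), ω' <+: ω → ω' ∈ T

/-- The set `D(T)` of triples `(ω,k,ω')` with `ω ∈ T`, `ωk ∉ T`, `ω' ∈ T`,
`ω' <_lex ωk`, and `ω'` not a prefix of `ω`. -/
noncomputable def Dset (m : ℕ) (T : Finset (List (Fin m))) :
    Finset ((List (Fin m) × Fin m) × List (Fin m)) :=
  ((T ×ˢ (Finset.univ : Finset (Fin m))) ×ˢ T).filter fun x =>
    x.1.1 ++ [x.1.2] ∉ T ∧ List.Lex (· < ·) x.2 (x.1.1 ++ [x.1.2]) ∧ ¬ x.2 <+: x.1.1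

/-! Classify a triple `(ω, a, ω')` of `D(T)` by the first letters `k` of `ωa` and `k'` of `ω'`
(`ω' ≠ ∅`, since `∅` is a prefix of `ω`). Lexicographic order forces `k' ≤ k`. For `k' = k` the
triple is `k` prepended to a triple of `D(T_k)`. For `k' < k` both conditions on `ω'` hold
automatically, so this class is the product of `k' T_{k'}` with the set of pairs `(ω, a)`,
`ω ∈ T`, `ωa ∉ T`, whose word `ωa` starts with `k`. These are the missing children of `k T_k`
(just `(∅, k)` if `T_k` is empty); a nonempty tree with `n` vertices fills `n - 1` of its `m n`
child slots, leaving `(m - 1) n + 1`. -/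

open Finset

variable {m : ℕ}

@[grind =] lemma mem_Dset {S : Finset (List (Fin m))} {ω ω' : List (Fin m)} {a : Fin m} :
    ((ω, a), ω') ∈ Dset m S ↔
      ω ∈ S ∧ ω' ∈ S ∧ ω ++ [a] ∉ S ∧ List.Lex (· < ·) ω' (ω ++ [a]) ∧ ¬ ω' <+: ω := by
  simp only [Dset, mem_filter, mem_product, mem_univ, and_true]
  tauto

def boundary (S : Finset (List (Fin m))) : Finset (List (Fin m) × Fin m) :=
  (S ×ˢ univ).filter fun p => p.1 ++ [p.2] ∉ S

@[simp, grind =] lemma mem_boundary {S : Finset (List (Fin m))} {ω : List (Fin m)} {a : Fin m} :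
    (ω, a) ∈ boundary S ↔ ω ∈ S ∧ ω ++ [a] ∉ S := by
  simp [boundary]

namespace IsTree

variable {S : Finset (List (Fin m))}

lemma nil_mem (hS : IsTree m S) (hne : S.Nonempty) : [] ∈ S :=
  let ⟨ω, hω⟩ := hne
  hS ω hω [] List.nil_prefix

lemma card_filter_append_mem (hS : IsTree m S) (hne : S.Nonempty) :
    #((S ×ˢ univ).filter fun p => p.1 ++ [p.2] ∈ S) = #S - 1 := by
  rw [← card_erase_of_mem (hS.nil_mem hne)]
  refine card_bij (fun p _ => p.1 ++ [p.2]) (by simp) ?_ ?_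
  · simp [List.append_singleton_inj, Prod.ext_iff]
  · intro σ hσ
    obtain ⟨hσnil, hσS⟩ := mem_erase.mp hσ
    obtain ⟨ω, a, rfl⟩ := (List.eq_nil_or_concat σ).resolve_left hσnil
    rw [List.concat_eq_append] at hσS ⊢
    exact ⟨(ω, a), by simp [hS _ hσS ω (List.prefix_append _ _), hσS], rfl⟩

lemma card_boundary (hm : 0 < m) (hS : IsTree m S) (hne : S.Nonempty) :
    #(boundary S) = (m - 1) * #S + 1 := by
  have hsplit := card_filter_add_card_filter_not (s := S ×ˢ univ) (fun p => p.1 ++ [p.2] ∈ S)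
  rw [hS.card_filter_append_mem hne, card_product, card_univ, Fintype.card_fin] at hsplit
  obtain ⟨n, hn⟩ := Nat.exists_eq_add_one_of_ne_zero hne.card_pos.ne'
  obtain ⟨m', rfl⟩ := Nat.exists_eq_add_one_of_ne_zero hm.ne'
  rw [hn] at hsplit ⊢
  simp only [boundary, Nat.add_sub_cancel] at hsplit ⊢
  linarith

end IsTree

def graft (Ts : Fin m → Finset (List (Fin m))) : Finset (List (Fin m)) :=
  insert [] (univ.biUnion fun k => (Ts k).image fun ω => k :: ω)

/- `rootPair ((ω, a), ω')` consists of the first letters of `ω ++ [a]` and of `ω'`; the default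
of `headD` on `ω'` never matters on `Dset`, where `ω' ≠ []`. -/
def rootLetter (p : List (Fin m) × Fin m) : Fin m := p.1.headD p.2

def rootPair (x : (List (Fin m) × Fin m) × List (Fin m)) : Fin m × Fin m :=
  (rootLetter x.1, x.2.headD x.1.2)

section graft

variable {Ts : Fin m → Finset (List (Fin m))} {k k' : Fin m}

@[simp, grind .] lemma nil_mem_graft : [] ∈ graft Ts := mem_insert_self _ _

@[simp, grind =] lemma cons_mem_graft {σ : List (Fin m)} : k :: σ ∈ graft Ts ↔ σ ∈ Ts k := by
  simp [graft, eq_comm]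

lemma boundary_graft_filter_of_eq_empty (hk : Ts k = ∅) :
    (boundary (graft Ts)).filter (rootLetter · = k) = {([], k)} := by
  ext ⟨ω, a⟩
  rcases ω with _ | ⟨j, τ⟩ <;> grind [rootLetter]

lemma boundary_graft_filter_of_nil_mem (hk : [] ∈ Ts k) :
    (boundary (graft Ts)).filter (rootLetter · = k) =
      (boundary (Ts k)).image fun p => (k :: p.1, p.2) := by
  ext ⟨ω, a⟩
  rcases ω with _ | ⟨j, τ⟩ <;> simp [rootLetter] <;> grind

lemma card_boundary_graft_filter (hTk : IsTree m (Ts k)) :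
    #((boundary (graft Ts)).filter (rootLetter · = k)) = (m - 1) * #(Ts k) + 1 := by
  rcases (Ts k).eq_empty_or_nonempty with hk | hk
  · simp [boundary_graft_filter_of_eq_empty hk, hk]
  · rw [boundary_graft_filter_of_nil_mem (hTk.nil_mem hk),
      card_image_of_injective _ fun p q h => by simpa [Prod.ext_iff] using h,
      hTk.card_boundary k.pos hk]

lemma Dset_graft_filter_rootPair_self :
    (Dset m (graft Ts)).filter (rootPair · = (k, k)) =
      (Dset m (Ts k)).image fun x => ((k :: x.1.1, x.1.2), k :: x.2) := by
  ext ⟨⟨ω, a⟩, ω'⟩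
  rcases ω with _ | ⟨j, τ⟩ <;> rcases ω' with _ | ⟨j', σ⟩ <;>
    simp [rootPair, rootLetter, mem_Dset, List.cons_lex_cons_iff] <;> grind

lemma Dset_graft_filter_rootPair_of_lt (h : k' < k) :
    (Dset m (graft Ts)).filter (rootPair · = (k, k')) =
      (boundary (graft Ts)).filter (rootLetter · = k) ×ˢ (Ts k').image (k' :: ·) := by
  ext ⟨⟨ω, a⟩, ω'⟩
  rcases ω with _ | ⟨j, τ⟩ <;> rcases ω' with _ | ⟨j', σ⟩ <;>
    grind [rootPair, rootLetter, List.cons_lex_cons_iff]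

lemma Dset_graft_filter_rootPair_of_gt (h : k < k') :
    (Dset m (graft Ts)).filter (rootPair · = (k, k')) = ∅ := by
  ext ⟨⟨ω, a⟩, ω'⟩
  rcases ω with _ | ⟨j, τ⟩ <;> rcases ω' with _ | ⟨j', σ⟩ <;>
    grind [rootPair, rootLetter, List.cons_lex_cons_iff]

lemma card_Dset_graft_filter_rootPair (k k' : Fin m) :
    #((Dset m (graft Ts)).filter (rootPair · = (k, k'))) =
      (if k' = k then #(Dset m (Ts k)) else 0) +
        if k' < k then #((boundary (graft Ts)).filter (rootLetter · = k)) * #(Ts k') else 0 := by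
  rcases lt_trichotomy k' k with h | rfl | h
  · simp [h.ne, h, Dset_graft_filter_rootPair_of_lt h,
      card_image_of_injective _ List.cons_injective]
  · rw [Dset_graft_filter_rootPair_self, card_image_of_injective]
    · simp
    · intro x y hxy
      simpa [Prod.ext_iff] using hxy
  · simp [h.ne', h.not_gt, Dset_graft_filter_rootPair_of_gt h]

end graft

theorem Dset_card_grafting_general (m : ℕ)
    (T : Finset (List (Fin m))) (Ts : Fin m → Finset (List (Fin m)))
    (hTs : ∀ k, IsTree m (Ts k))
    (hgraft : T = insert [] (Finset.univ.biUnion fun k => (Ts k).image fun ω => k :: ω)) :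
    (Dset m T).card =
      (∑ k, (Dset m (Ts k)).card) +
        ∑ k, ∑ k' ∈ Finset.univ.filter (· < k),
          (Ts k').card * ((m - 1) * (Ts k).card + 1) := by
  change T = graft Ts at hgraft
  subst hgraft
  rw [card_eq_sum_card_fiberwise (f := rootPair) (t := univ) fun _ _ => mem_univ _,
    Fintype.sum_prod_type]
  simp only [card_Dset_graft_filter_rootPair, sum_add_distrib, sum_ite_eq', mem_univ, if_true,
    ← sum_filter]
  congr 1
  refine sum_congr rfl fun k _ => sum_congr rfl fun k' _ => ?_
  rw [card_boundary_graft_filter (hTs k), mul_comm]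

/-- For the grafting `T = {∅} ∪ ⋃_k k·T_k`, the statistic `|D(T)|` satisfies
`|D(T)| = ∑_k |D(T_k)| + ∑_{k'<k} |T_{k'}|·((m-1)|T_k|+1)`. -/
theorem Dset_card_grafting (m : ℕ) (hm : 1 ≤ m)
    (T : Finset (List (Fin m))) (Ts : Fin m → Finset (List (Fin m)))
    (hTs : ∀ k, IsTree m (Ts k))
    (hgraft : T = insert [] (Finset.univ.biUnion fun k => (Ts k).image fun ω => k :: ω)) :
    (Dset m T).card =
      (∑ k, (Dset m (Ts k)).card) +
        ∑ k, ∑ k' ∈ Finset.univ.filter (· < k),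
          (Ts k').card * ((m - 1) * (Ts k).card + 1) :=
  Dset_card_grafting_general m T Ts hTs hgraft
end

section
/- If the coefficients z_d \in \mathbb{Q}(q) satisfy, for all d \geq 0, the convolution identity \frac{q^d \cdot q^{(m-1)d(d-1)/2}}{(q^{m-1};q^{m-1})_d} = \sum_{e=0}^d \frac{q^{(m-1)(d-e)(d-e-1)/2}}{(q^{m-1};q^{m-1})_{d-e}} \cdot \frac{(q-1)^e z_e}{(q^{m-1};q^{m-1})_e}, then z_d = \prod_{i=0}^{d-1} \frac{q^{(m-1)i+1}-1}{q-1} for all d. -/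
open Finset

section ring
variable {R : Type*} [CommRing R]

def gb (Q : R) : ℕ → ℕ → R
  | _, 0 => 1
  | 0, _+1 => 0
  | d+1, e+1 => gb Q d (e+1) + Q^(d-e) * gb Q d e

@[simp] lemma gb_zero (Q : R) (d : ℕ) : gb Q d 0 = 1 := by cases d <;> rfl

lemma gb_of_lt (Q : R) : ∀ {d e : ℕ}, d < e → gb Q d e = 0
  | 0, e+1, _ => rfl
  | d+1, e+1, h => by
      have h1 : d < e + 1 := by omega
      have h2 : d < e := by omega
      simp [gb, gb_of_lt Q h1, gb_of_lt Q h2]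

@[simp] lemma gb_self (Q : R) : ∀ d : ℕ, gb Q d d = 1
  | 0 => rfl
  | d+1 => by simp [gb, gb_self Q d, gb_of_lt Q (Nat.lt_succ_self d)]

def poch (Q : R) (n : ℕ) : R := ∏ k ∈ range n, (1 - Q * Q ^ k)

@[simp] lemma poch_zero (Q : R) : poch Q 0 = 1 := by simp [poch]

lemma poch_succ (Q : R) (n : ℕ) : poch Q (n+1) = poch Q n * (1 - Q * Q ^ n) := by
  simp [poch, prod_range_succ]

lemma gb_mul_poch (Q : R) : ∀ d e : ℕ, e ≤ d →
    gb Q d e * (poch Q e * poch Q (d - e)) = poch Q d := by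
  intro d
  induction d with
  | zero => intro e he; interval_cases e; simp
  | succ d ih =>
    intro e he
    match e with
    | 0 => simp
    | e+1 =>
      have he' : e ≤ d := by omega
      rcases Nat.lt_or_ge e d with hlt | hge
      · have h1 := ih (e+1) hlt
        have h2 := ih e he'
        set k := d - (e+1) with hk
        have hds : d + 1 - (e+1) = k + 1 := by omega
        have hds2 : d - (e+1) = k := rfl
        have hds3 : d - e = k + 1 := by omega
        show (gb Q d (e+1) + Q^(d-e) * gb Q d e) * (poch Q (e+1) * poch Q (d+1-(e+1))) = poch Q (d+1)
        rw [hds, hds3, poch_succ Q k, poch_succ Q d]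
        rw [hds3, poch_succ Q k] at h2
        have hpow : Q * Q ^ d = Q ^ (k+1) * (Q * Q ^ e) := by
          rw [← pow_succ', ← pow_succ', ← pow_add]
          congr 1
          omega
        rw [poch_succ Q e] at h1 ⊢
        linear_combination (1 - Q*Q^k) * h1 + Q^(k+1)*(1 - Q*Q^e)*h2 + poch Q d * hpow
      · have hed : e = d := by omega
        subst hed
        show (gb Q e (e+1) + Q^(e-e) * gb Q e e) * (poch Q (e+1) * poch Q (e+1-(e+1))) = poch Q (e+1)
        simp [gb_of_lt Q (Nat.lt_succ_self e)]

def e2 (n : ℕ) : ℕ := n.choose 2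

@[simp] lemma e2_zero : e2 0 = 0 := rfl

lemma e2_succ (n : ℕ) : e2 (n+1) = e2 n + n := by
  unfold e2
  rw [Nat.choose_succ_succ]
  simp [Nat.add_comm]

lemma e2_eq (n : ℕ) : n * (n-1) / 2 = e2 n := (Nat.choose_two_right n).symm

lemma key (x Q : R) : ∀ d : ℕ, x ^ d * Q ^ (e2 d) =
    ∑ e ∈ range (d+1), gb Q d e * Q ^ (e2 (d - e)) * ∏ i ∈ range e, (x * Q ^ i - 1) := by
  intro d
  induction d with
  | zero => simp
  | succ d ih =>
    set P : ℕ → R := fun e => ∏ i ∈ range e, (x * Q ^ i - 1) with hP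
    have hT : ∑ e ∈ range (d+2), gb Q d e * Q ^ (e2 (d+1-e)) * P e
        = ∑ e ∈ range (d+1), gb Q d e * (Q ^ (e2 (d-e)) * Q ^ (d-e)) * P e := by
      rw [sum_range_succ, gb_of_lt Q (Nat.lt_succ_self d)]
      simp only [zero_mul, add_zero]
      refine sum_congr rfl fun e hee => ?_
      have he : e ≤ d := by have := mem_range.mp hee; omega
      rw [show d + 1 - e = (d - e) + 1 by omega, e2_succ, pow_add]
    have hstep : ∑ e ∈ range (d+2), gb Q (d+1) e * Q ^ (e2 (d+1-e)) * P e
        = ∑ e ∈ range (d+2), gb Q d e * Q ^ (e2 (d+1-e)) * P e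
          + ∑ e ∈ range (d+1), gb Q d e * (Q ^ (e2 (d-e)) * Q ^ (d-e)) * (x * Q ^ e * P e - P e) := by
      rw [sum_range_succ' (fun e => gb Q (d+1) e * Q ^ (e2 (d+1-e)) * P e) (d+1),
          sum_range_succ' (fun e => gb Q d e * Q ^ (e2 (d+1-e)) * P e) (d+1)]
      rw [add_right_comm]
      congr 1
      rw [← sum_add_distrib]
      refine sum_congr rfl fun e hee => ?_
      show gb Q (d+1) (e+1) * Q ^ (e2 (d+1-(e+1))) * P (e+1) = _
      have h1 : gb Q (d+1) (e+1) = gb Q d (e+1) + Q^(d-e) * gb Q d e := rfl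
      have h2 : d + 1 - (e+1) = d - e := by omega
      have h3 : P (e+1) = P e * (x * Q ^ e - 1) := prod_range_succ _ _
      rw [h1, h2, h3]
      ring
      simp
    rw [hstep, hT]
    have hS2 : ∑ e ∈ range (d+1), gb Q d e * (Q ^ (e2 (d-e)) * Q ^ (d-e)) * (x * Q ^ e * P e - P e)
        = x * Q ^ d * (∑ e ∈ range (d+1), gb Q d e * Q ^ (e2 (d-e)) * P e)
          - ∑ e ∈ range (d+1), gb Q d e * (Q ^ (e2 (d-e)) * Q ^ (d-e)) * P e := by
      rw [mul_sum, ← sum_sub_distrib]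
      refine sum_congr rfl fun e hee => ?_
      have he : e ≤ d := by have := mem_range.mp hee; omega
      have : Q ^ (d-e) * Q ^ e = Q ^ d := by rw [← pow_add]; congr 1; omega
      linear_combination (gb Q d e * Q ^ (e2 (d-e)) * P e * x) * this
    rw [hS2, ← ih, e2_succ, pow_add]
    ring
end ring

lemma ratfunc_X_pow_ne_one (n : ℕ) (hn : n ≠ 0) : (RatFunc.X : RatFunc ℚ) ^ n ≠ 1 := by
  intro h
  have h2 : algebraMap (Polynomial ℚ) (RatFunc ℚ) (Polynomial.X ^ n)
      = algebraMap (Polynomial ℚ) (RatFunc ℚ) 1 := by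
    simpa [map_pow, RatFunc.algebraMap_X] using h
  have h3 : (Polynomial.X : Polynomial ℚ) ^ n = 1 := RatFunc.algebraMap_injective ℚ h2
  have := congrArg Polynomial.natDegree h3
  simp [Polynomial.natDegree_X_pow] at this
  exact hn this

section mainident
variable (m : ℕ) (hm : 2 ≤ m)

noncomputable def wfun (m : ℕ) (e : ℕ) : RatFunc ℚ :=
  ∏ i ∈ Finset.range e,
    ((RatFunc.X : RatFunc ℚ) ^ ((m - 1) * i + 1) - 1) / ((RatFunc.X : RatFunc ℚ) - 1)

lemma poch_def {R : Type*} [CommRing R] (Q : R) (n : ℕ) :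
    poch Q n = ∏ k ∈ Finset.range n, (1 - Q * Q ^ k) := rfl

lemma hfac (k : ℕ) (hm : 2 ≤ m) :
    (1 : RatFunc ℚ) - (RatFunc.X : RatFunc ℚ) ^ (m-1) * ((RatFunc.X : RatFunc ℚ) ^ (m-1)) ^ k ≠ 0 := by
  intro h
  have h1 : (RatFunc.X : RatFunc ℚ) ^ (m-1) * ((RatFunc.X : RatFunc ℚ) ^ (m-1)) ^ k
      = (RatFunc.X : RatFunc ℚ) ^ ((m-1)*(k+1)) := by
    rw [← pow_succ', ← pow_mul]
  exact ratfunc_X_pow_ne_one ((m-1)*(k+1)) (Nat.mul_ne_zero (by omega) (Nat.succ_ne_zero k))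
    (by rw [← h1]; linear_combination -h)

lemma hpoch (hm : 2 ≤ m) (n : ℕ) : poch ((RatFunc.X : RatFunc ℚ) ^ (m-1)) n ≠ 0 :=
  Finset.prod_ne_zero_iff.mpr fun k _ => hfac m k hm

lemma hX1 : (RatFunc.X : RatFunc ℚ) - 1 ≠ 0 := by
  refine sub_ne_zero.mpr ?_
  simpa using ratfunc_X_pow_ne_one 1 one_ne_zero

lemma two_dvd_mul_pred (n : ℕ) : 2 ∣ n * (n - 1) := by
  rcases n with _ | k
  · simp
  · simpa [Nat.mul_comm] using (Nat.even_mul_succ_self k).two_dvd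

lemma hexp (n : ℕ) :
    (RatFunc.X : RatFunc ℚ) ^ ((m - 1) * n * (n - 1) / 2)
      = ((RatFunc.X : RatFunc ℚ) ^ (m-1)) ^ (e2 n) := by
  rw [← pow_mul]
  congr 1
  rw [mul_assoc, Nat.mul_div_assoc (m-1) (two_dvd_mul_pred n), e2_eq]

lemma hPw (hm : 2 ≤ m) (e : ℕ) :
    ((RatFunc.X : RatFunc ℚ) - 1) ^ e * wfun m e
      = ∏ i ∈ Finset.range e, ((RatFunc.X : RatFunc ℚ) * ((RatFunc.X : RatFunc ℚ) ^ (m-1)) ^ i - 1) := by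
  unfold wfun
  rw [Finset.prod_div_distrib, Finset.prod_const, Finset.card_range, mul_comm,
    div_mul_cancel₀ _ (pow_ne_zero e hX1)]
  refine Finset.prod_congr rfl fun i _ => ?_
  rw [← pow_mul, ← pow_succ']

set_option maxHeartbeats 800000 in
lemma ident (hm : 2 ≤ m) (d : ℕ) :
    (RatFunc.X : RatFunc ℚ) ^ d * (RatFunc.X : RatFunc ℚ) ^ ((m - 1) * d * (d - 1) / 2) /
        ∏ k ∈ Finset.range d, (1 - (RatFunc.X : RatFunc ℚ) ^ (m - 1) *
          ((RatFunc.X : RatFunc ℚ) ^ (m - 1)) ^ k) =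
      ∑ e ∈ Finset.range (d + 1),
        (RatFunc.X : RatFunc ℚ) ^ ((m - 1) * (d - e) * (d - e - 1) / 2) /
            (∏ k ∈ Finset.range (d - e), (1 - (RatFunc.X : RatFunc ℚ) ^ (m - 1) *
              ((RatFunc.X : RatFunc ℚ) ^ (m - 1)) ^ k)) *
          (((RatFunc.X : RatFunc ℚ) - 1) ^ e * wfun m e /
            ∏ k ∈ Finset.range e, (1 - (RatFunc.X : RatFunc ℚ) ^ (m - 1) *
              ((RatFunc.X : RatFunc ℚ) ^ (m - 1)) ^ k)) := by
  rw [← poch_def, hexp m d]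
  have hkey := key (RatFunc.X : RatFunc ℚ) ((RatFunc.X : RatFunc ℚ) ^ (m-1)) d
  rw [hkey, Finset.sum_div]
  refine Finset.sum_congr rfl fun e he => ?_
  have hle : e ≤ d := by have := Finset.mem_range.mp he; omega
  rw [← poch_def, ← poch_def, hexp m (d-e), hPw m hm e]
  rw [div_mul_div_comm, div_eq_div_iff (hpoch m hm d) (mul_ne_zero (hpoch m hm (d-e)) (hpoch m hm e))]
  linear_combination (((RatFunc.X : RatFunc ℚ) ^ (m-1)) ^ (e2 (d-e)) *
    ∏ i ∈ Finset.range e, ((RatFunc.X : RatFunc ℚ) * ((RatFunc.X : RatFunc ℚ) ^ (m-1)) ^ i - 1)) *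
    gb_mul_poch ((RatFunc.X : RatFunc ℚ) ^ (m-1)) d e hle

end mainident

/-- If `z_d ∈ ℚ(q)` satisfy the convolution identity
`q^d q^{(m-1)d(d-1)/2}/(q^{m-1};q^{m-1})_d
  = ∑_{e=0}^d q^{(m-1)(d-e)(d-e-1)/2}/(q^{m-1};q^{m-1})_{d-e} · (q-1)^e z_e/(q^{m-1};q^{m-1})_e`
for all `d`, then `z_d = ∏_{i=0}^{d-1} (q^{(m-1)i+1}-1)/(q-1)`. -/
theorem resolution_motive_closed_form (m : ℕ) (hm : 2 ≤ m) (z : ℕ → RatFunc ℚ)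
    (hz : ∀ d : ℕ,
      (RatFunc.X : RatFunc ℚ) ^ d * (RatFunc.X : RatFunc ℚ) ^ ((m - 1) * d * (d - 1) / 2) /
          ∏ k ∈ Finset.range d, (1 - (RatFunc.X : RatFunc ℚ) ^ (m - 1) *
            ((RatFunc.X : RatFunc ℚ) ^ (m - 1)) ^ k) =
        ∑ e ∈ Finset.range (d + 1),
          (RatFunc.X : RatFunc ℚ) ^ ((m - 1) * (d - e) * (d - e - 1) / 2) /
              (∏ k ∈ Finset.range (d - e), (1 - (RatFunc.X : RatFunc ℚ) ^ (m - 1) *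
                ((RatFunc.X : RatFunc ℚ) ^ (m - 1)) ^ k)) *
            (((RatFunc.X : RatFunc ℚ) - 1) ^ e * z e /
              ∏ k ∈ Finset.range e, (1 - (RatFunc.X : RatFunc ℚ) ^ (m - 1) *
                ((RatFunc.X : RatFunc ℚ) ^ (m - 1)) ^ k))) :
    ∀ d : ℕ, z d = ∏ i ∈ Finset.range d,
      ((RatFunc.X : RatFunc ℚ) ^ ((m - 1) * i + 1) - 1) / ((RatFunc.X : RatFunc ℚ) - 1) := by
  intro d
  induction d using Nat.strong_induction_on with
  | _ d ih =>
  have hsum : _ = _ := (hz d).symm.trans (ident m hm d)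
  rw [Finset.sum_range_succ, Finset.sum_range_succ] at hsum
  have hinit : (∑ e ∈ Finset.range d,
      (RatFunc.X : RatFunc ℚ) ^ ((m - 1) * (d - e) * (d - e - 1) / 2) /
          (∏ k ∈ Finset.range (d - e), (1 - (RatFunc.X : RatFunc ℚ) ^ (m - 1) *
            ((RatFunc.X : RatFunc ℚ) ^ (m - 1)) ^ k)) *
        (((RatFunc.X : RatFunc ℚ) - 1) ^ e * z e /
          ∏ k ∈ Finset.range e, (1 - (RatFunc.X : RatFunc ℚ) ^ (m - 1) *
            ((RatFunc.X : RatFunc ℚ) ^ (m - 1)) ^ k))) =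
      ∑ e ∈ Finset.range d,
      (RatFunc.X : RatFunc ℚ) ^ ((m - 1) * (d - e) * (d - e - 1) / 2) /
          (∏ k ∈ Finset.range (d - e), (1 - (RatFunc.X : RatFunc ℚ) ^ (m - 1) *
            ((RatFunc.X : RatFunc ℚ) ^ (m - 1)) ^ k)) *
        (((RatFunc.X : RatFunc ℚ) - 1) ^ e * wfun m e /
          ∏ k ∈ Finset.range e, (1 - (RatFunc.X : RatFunc ℚ) ^ (m - 1) *
            ((RatFunc.X : RatFunc ℚ) ^ (m - 1)) ^ k)) := by
    refine Finset.sum_congr rfl fun e he => ?_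
    rw [ih e (Finset.mem_range.mp he)]
    rfl
  rw [hinit] at hsum
  have hlast := add_left_cancel hsum
  rw [Nat.sub_self] at hlast
  simp only [Finset.range_zero, Finset.prod_empty, Nat.zero_mul, Nat.mul_zero, pow_zero,
    Nat.zero_div, div_one, one_mul] at hlast
  have hzd : ((RatFunc.X : RatFunc ℚ) - 1) ^ d * z d = ((RatFunc.X : RatFunc ℚ) - 1) ^ d * wfun m d := by
    have hp := hpoch m hm d
    rw [poch_def] at hp
    rw [div_eq_div_iff hp hp] at hlast
    exact mul_right_cancel₀ hp hlast
  have := mul_left_cancel₀ (pow_ne_zero d (hX1)) hzd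
  rw [this]
  rfl
end

section
/- Let \varphi_1, \ldots, \varphi_m be endomorphisms of a d-dimensional vector space V, and let F_* be a complete flag compatible with all the \varphi_k, such that for each i = 2, \ldots, d the induced maps \bar{\varphi}_k : F_i/F_{i-1} \to F_{i-1}/F_{i-2} (k = 1, \ldots, m) are not all zero. Then F_* is the unique complete flag compatible with all the \varphi_k (i.e., the unique complete flag F'_* satisfying \varphi_k(F'_i) \subseteq F'_{i-1} for all i, k). -/
/-- Let `F` be a complete flag compatible with endomorphisms `φ_1,…,φ_m` of a
`d`-dimensional space `V`, such that for each `i = 2,…,d` some induced map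
`F_i/F_{i-1} → F_{i-1}/F_{i-2}` is nonzero (equivalently, `φ_k(F_i) ⊄ F_{i-2}` for some `k`).
Then `F` is the unique complete flag compatible with all the `φ_k`. -/
theorem unique_compatible_flag (K V : Type*) [Field K] [AddCommGroup V] [Module K V]
    (d m : ℕ) (hm : 1 ≤ m) (hdim : Module.finrank K V = d)
    (φ : Fin m → Module.End K V) (F : ℕ → Submodule K V)
    (hbot : F 0 = ⊥) (htop : F d = ⊤)
    (hchain : ∀ i < d, F i < F (i + 1))
    (hcompat : ∀ k : Fin m, ∀ i < d, Submodule.map (φ k) (F (i + 1)) ≤ F i)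
    (hnonzero : ∀ i, 2 ≤ i → i ≤ d → ∃ k : Fin m, ¬ Submodule.map (φ k) (F i) ≤ F (i - 2)) :
    ∀ F' : ℕ → Submodule K V, F' 0 = ⊥ → F' d = ⊤ →
      (∀ i < d, F' i < F' (i + 1)) →
      (∀ k : Fin m, ∀ i < d, Submodule.map (φ k) (F' (i + 1)) ≤ F' i) →
      ∀ i ≤ d, F' i = F i := by
  intro F' hbot' htop' hchain' hcompat' i hid
  rcases Nat.eq_zero_or_pos d with hd0 | hd
  · have hi0 : i = 0 := by omega
    subst hi0
    rw [hbot', hbot]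
  haveI : FiniteDimensional K V := FiniteDimensional.of_finrank_pos (by omega)
  -- monotonicity of flags
  have mono : ∀ (G : ℕ → Submodule K V), (∀ i < d, G i < G (i + 1)) →
      ∀ a b, a ≤ b → b ≤ d → G a ≤ G b := by
    intro G hG a b hab hbd
    induction b with
    | zero => rw [Nat.le_zero.mp hab]
    | succ n ih =>
      rcases Nat.lt_or_ge a (n + 1) with h | h
      · exact le_trans (ih (by omega) (by omega)) (hG n (by omega)).le
      · have : a = n + 1 := by omega
        subst this; exact le_rfl
  -- finrank of flags
  have rank : ∀ (G : ℕ → Submodule K V), G 0 = ⊥ → G d = ⊤ → (∀ i < d, G i < G (i + 1)) →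
      ∀ i ≤ d, Module.finrank K (G i) = i := by
    intro G hb ht hG
    have lower : ∀ i ≤ d, i ≤ Module.finrank K (G i) := by
      intro i hi
      induction i with
      | zero => omega
      | succ n ih =>
        have h1 := Submodule.finrank_lt_finrank_of_lt (hG n (by omega))
        have := ih (by omega)
        omega
    have upper : ∀ j ≤ d, Module.finrank K (G (d - j)) + j ≤ d := by
      intro j hj
      induction j with
      | zero => rw [Nat.sub_zero, ht, finrank_top, hdim]; omega
      | succ n ih =>
        have e : d - (n + 1) + 1 = d - n := by omega
        have h1 : G (d - (n + 1)) < G (d - (n + 1) + 1) := hG _ (by omega)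
        rw [e] at h1
        have h2 := Submodule.finrank_lt_finrank_of_lt h1
        have := ih (by omega)
        omega
    intro i hi
    have h1 := lower i hi
    have h2 := upper (d - i) (by omega)
    have e : d - (d - i) = i := by omega
    rw [e] at h2
    omega
  have rankF := rank F hbot htop hchain
  have rankF' := rank F' hbot' htop' hchain'
  -- covering step
  have cov : ∀ i, i + 1 ≤ d → ∀ X : Submodule K V, X ≤ F (i + 1) → ¬ X ≤ F i →
      F i ⊔ X = F (i + 1) := by
    intro i hi X hX hnX
    apply Submodule.eq_of_le_of_finrank_le (sup_le (mono F hchain i (i + 1) (by omega) hi) hX)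
    have hlt : F i < F i ⊔ X := left_lt_sup.mpr hnX
    have h1 := Submodule.finrank_lt_finrank_of_lt hlt
    rw [rankF (i + 1) hi]
    rw [rankF i (by omega)] at h1
    omega
  -- the iterated image subspaces
  set R : ℕ → Submodule K V := fun j =>
    Nat.rec ⊤ (fun _ p => ⨆ k : Fin m, Submodule.map (φ k) p) j with hR
  have R0 : R 0 = ⊤ := rfl
  have Rsucc : ∀ j, R (j + 1) = ⨆ k : Fin m, Submodule.map (φ k) (R j) := fun j => rfl
  -- R j is contained in G (d - j) for any compatible flag G
  have hA : ∀ (G : ℕ → Submodule K V), G d = ⊤ →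
      (∀ k : Fin m, ∀ i < d, Submodule.map (φ k) (G (i + 1)) ≤ G i) →
      ∀ j ≤ d, R j ≤ G (d - j) := by
    intro G ht hc j hj
    induction j with
    | zero => rw [R0, Nat.sub_zero, ht]
    | succ n ih =>
      rw [Rsucc]
      apply iSup_le
      intro k
      have h1 : Submodule.map (φ k) (R n) ≤ Submodule.map (φ k) (G (d - n)) :=
        Submodule.map_mono (ih (by omega))
      have e : d - n - 1 + 1 = d - n := by omega
      have h2 := hc k (d - n - 1) (by omega)
      rw [e] at h2
      have e2 : d - (n + 1) = d - n - 1 := by omega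
      rw [e2]
      exact h1.trans h2
  -- R j is not contained in F (d - j - 1)
  have hB : ∀ j < d, ¬ R j ≤ F (d - j - 1) := by
    intro j hj
    induction j with
    | zero =>
      rw [R0]
      intro h
      have e : d - 0 - 1 + 1 = d := by omega
      have h1 : F (d - 0 - 1) < F d := by
        have := hchain (d - 0 - 1) (by omega)
        rwa [e] at this
      exact absurd htop (lt_of_le_of_lt h h1).ne'
    | succ n ih =>
      have ihn := ih (by omega)
      have heq : F (d - n - 1) ⊔ R n = F (d - n) := by
        have e : d - n - 1 + 1 = d - n := by omega
        have := cov (d - n - 1) (by omega) (R n)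
          (by rw [e]; exact hA F htop hcompat n (by omega)) ihn
        rwa [e] at this
      obtain ⟨k, hk⟩ := hnonzero (d - n) (by omega) (by omega)
      rw [← heq, Submodule.map_sup] at hk
      have h1 : Submodule.map (φ k) (F (d - n - 1)) ≤ F (d - n - 2) := by
        have e : d - n - 2 + 1 = d - n - 1 := by omega
        have := hcompat k (d - n - 2) (by omega)
        rwa [e] at this
      have e3 : d - n - 2 = d - (n + 1) - 1 := by omega
      intro hcon
      apply hk
      apply sup_le h1
      have h2 : Submodule.map (φ k) (R n) ≤ R (n + 1) := by
        rw [Rsucc]; exact le_iSup (fun k => Submodule.map (φ k) (R n)) k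
      rw [e3]
      exact h2.trans hcon
  -- F t ≤ F' t for all t ≤ d
  have hC : ∀ t ≤ d, F t ≤ F' t := by
    intro t ht
    induction t with
    | zero => rw [hbot]; exact bot_le
    | succ n ih =>
      have hj : d - (n + 1) < d := by omega
      have e1 : d - (d - (n + 1)) = n + 1 := by omega
      have e2 : d - (d - (n + 1)) - 1 = n := by omega
      have hBj := hB (d - (n + 1)) hj
      rw [show d - (d - (n+1)) - 1 = n from e2] at hBj
      have heq : F n ⊔ R (d - (n + 1)) = F (n + 1) := by
        have := cov n ht (R (d - (n + 1)))
          (by have := hA F htop hcompat (d - (n + 1)) (by omega); rwa [e1] at this) hBj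
        exact this
      rw [← heq]
      apply sup_le
      · exact (ih (by omega)).trans (mono F' hchain' n (n + 1) (by omega) ht)
      · have := hA F' htop' hcompat' (d - (n + 1)) (by omega)
        rwa [e1] at this
  exact (Submodule.eq_of_le_of_finrank_le (hC i hid)
    (by rw [rankF' i hid, rankF i hid])).symm
end
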